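/- arXiv:2101.05510 — 3 statements merged into one kernel-verified Lean document; each statement's English description precedes it below -/
import Mathlib

section
/- Let B1 ∈ ℝ^{N×E} and B2 ∈ ℝ^{E×T} be real matrices with B1 B2 = 0, and set L0 = B1 B1ᵀ, L1 = B1ᵀ B1 + B2 B2ᵀ, L2 = B2ᵀ B2. Given inputs v₀ ∈ ℝ^N, f₀ ∈ ℝ^E, t₀ ∈ ℝ^T, define the two-layer linear simplicial network (identity activation) by v₁ = L0 v₀ + B1 f₀, f₁ = L1 f₀ + B2 t₀ + B1ᵀ v₀, t₁ = L2 t₀ + B2ᵀ f₀, and v₂ = L0 v₁ + B1 f₁, f₂ = L1 f₁ + B2 t₁ + B1ᵀ v₁, t₂ = L2 t₁ + B2ᵀ f₁. Then v₂ = 2 L0 B1 f₀ + L0(L0 + I) v₀, f₂ = L1(L1 + I) f₀ + (L1 B2 + B2 L2) t₀ + (L1 B1ᵀ + B1ᵀ L0) v₀, and t₂ = L2(L2 + I) t₀ + (L2 B2ᵀ + B2ᵀ L1) f₀. In particular, v₂ does not depend on t₀ and t₂ does not depend on v₀: with linear activations, each level's output depends only on the input at adjacent levels of the simplicial complex. 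-/
open Matrix

theorem linear_simplicial_network_two_layers
    {N E T : ℕ} (B1 : Matrix (Fin N) (Fin E) ℝ) (B2 : Matrix (Fin E) (Fin T) ℝ)
    (hB : B1 * B2 = 0)
    (v0 : Fin N → ℝ) (f0 : Fin E → ℝ) (t0 : Fin T → ℝ)
    (L0 : Matrix (Fin N) (Fin N) ℝ) (L1 : Matrix (Fin E) (Fin E) ℝ)
    (L2 : Matrix (Fin T) (Fin T) ℝ)
    (hL0 : L0 = B1 * B1ᵀ) (hL1 : L1 = B1ᵀ * B1 + B2 * B2ᵀ) (hL2 : L2 = B2ᵀ * B2)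
    (v1 : Fin N → ℝ) (f1 : Fin E → ℝ) (t1 : Fin T → ℝ)
    (hv1 : v1 = L0 *ᵥ v0 + B1 *ᵥ f0)
    (hf1 : f1 = L1 *ᵥ f0 + B2 *ᵥ t0 + B1ᵀ *ᵥ v0)
    (ht1 : t1 = L2 *ᵥ t0 + B2ᵀ *ᵥ f0)
    (v2 : Fin N → ℝ) (f2 : Fin E → ℝ) (t2 : Fin T → ℝ)
    (hv2 : v2 = L0 *ᵥ v1 + B1 *ᵥ f1)
    (hf2 : f2 = L1 *ᵥ f1 + B2 *ᵥ t1 + B1ᵀ *ᵥ v1)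
    (ht2 : t2 = L2 *ᵥ t1 + B2ᵀ *ᵥ f1) :
    v2 = (2 : ℝ) • ((L0 * B1) *ᵥ f0) + (L0 * (L0 + 1)) *ᵥ v0 ∧
    f2 = (L1 * (L1 + 1)) *ᵥ f0 + (L1 * B2 + B2 * L2) *ᵥ t0 +
      (L1 * B1ᵀ + B1ᵀ * L0) *ᵥ v0 ∧
    t2 = (L2 * (L2 + 1)) *ᵥ t0 + (L2 * B2ᵀ + B2ᵀ * L1) *ᵥ f0 := by
  have hB' : B2ᵀ * B1ᵀ = 0 := by
    rw [← transpose_mul, hB, transpose_zero]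
  have h1 : B1 * L1 = L0 * B1 := by
    rw [hL0, hL1, Matrix.mul_add, ← Matrix.mul_assoc, ← Matrix.mul_assoc, hB, Matrix.zero_mul,
      add_zero, Matrix.mul_assoc]
  have h2 : L1 * B1ᵀ = B1ᵀ * L0 := by
    rw [hL0, hL1, Matrix.add_mul, Matrix.mul_assoc B2, hB', Matrix.mul_zero, add_zero,
      Matrix.mul_assoc]
  have h3 : L1 * B2 = B2 * L2 := by
    rw [hL2, hL1, Matrix.add_mul, Matrix.mul_assoc B1ᵀ, hB, Matrix.mul_zero, zero_add,
      Matrix.mul_assoc]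
  have h4 : L2 * B2ᵀ = B2ᵀ * L1 := by
    rw [hL2, hL1, Matrix.mul_add, ← Matrix.mul_assoc B2ᵀ B1ᵀ, hB', Matrix.zero_mul, zero_add,
      Matrix.mul_assoc]
  have hBB : B1 * B1ᵀ = L0 := hL0.symm
  have hB2 : B2ᵀ * B2 = L2 := hL2.symm
  have hsum : (B2 * B2ᵀ) *ᵥ f0 + (B1ᵀ * B1) *ᵥ f0 = L1 *ᵥ f0 := by
    rw [← add_mulVec, hL1, add_comm (B1ᵀ * B1)]
  subst hv1 hf1 ht1 hv2 hf2 ht2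
  refine ⟨?_, ?_, ?_⟩
  · simp only [mulVec_add, mulVec_mulVec, mul_add, add_mulVec, mul_one, h1, hBB, hB,
      zero_mulVec, two_smul]
    abel
  · simp only [mulVec_add, mulVec_mulVec, mul_add, add_mulVec, mul_one, h1, h2, h3, h4,
      hBB, hB2, hB, hB', zero_mulVec, two_smul]
    rw [← hsum]
    abel
  · simp only [mulVec_add, mulVec_mulVec, mul_add, add_mulVec, mul_one, h3, h4, hB2, hB',
      zero_mulVec, two_smul]
    abel
end

section
/- Let L1 ∈ ℝ^{E×E} be a real matrix, let Θ ∈ ℝ^{E×E} be a diagonal matrix each of whose diagonal entries is 1 or −1 (so Θ² = I), let σ : ℝ → ℝ be an odd function, and let W₁ ∈ ℝ^{F₀×F₁}, W₂ ∈ ℝ^{F₁×F₂} be weight matrices. Define the two-layer network g_{L,W}(F) = σ.(L · σ.(L F W₁) · W₂) for F ∈ ℝ^{E×F₀}, where σ.(·) denotes elementwise application of σ. Then the network is orientation equivariant: for every F ∈ ℝ^{E×F₀}, g_{ΘL1Θ, W}(ΘF) = Θ · g_{L1, W}(F). -/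
open Matrix

theorem simplicial_network_orientation_equivariance
    {E F0 F1 F2 : ℕ} (L1 : Matrix (Fin E) (Fin E) ℝ)
    (d : Fin E → ℝ) (hd : ∀ i, d i = 1 ∨ d i = -1)
    (Θ : Matrix (Fin E) (Fin E) ℝ) (hΘ : Θ = Matrix.diagonal d)
    (σ : ℝ → ℝ) (hσ : ∀ x : ℝ, σ (-x) = -σ x)
    (W1 : Matrix (Fin F0) (Fin F1) ℝ) (W2 : Matrix (Fin F1) (Fin F2) ℝ)
    (F : Matrix (Fin E) (Fin F0) ℝ) :
    ((Θ * L1 * Θ) * (((Θ * L1 * Θ) * (Θ * F) * W1).map σ) * W2).map σ =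
      Θ * ((L1 * ((L1 * F * W1).map σ) * W2).map σ) := by
  subst hΘ
  have hΘΘ : Matrix.diagonal d * Matrix.diagonal d = (1 : Matrix (Fin E) (Fin E) ℝ) := by
    rw [Matrix.diagonal_mul_diagonal]
    ext i j
    rcases hd i with h | h <;>
      simp [Matrix.diagonal_apply, Matrix.one_apply, h] <;>
      rcases eq_or_ne i j with rfl | hij <;> simp [hij]
  have hmap : ∀ {n : ℕ} (M : Matrix (Fin E) (Fin n) ℝ),
      (Matrix.diagonal d * M).map σ = Matrix.diagonal d * (M.map σ) := by
    intro n M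
    ext i j
    rcases hd i with h | h <;>
      simp [Matrix.diagonal_mul, Matrix.map_apply, h, hσ]
  have h1 : (Matrix.diagonal d * L1 * Matrix.diagonal d) * (Matrix.diagonal d * F) * W1
      = Matrix.diagonal d * (L1 * F * W1) := by
    simp only [Matrix.mul_assoc]
    rw [← Matrix.mul_assoc (Matrix.diagonal d) (Matrix.diagonal d), hΘΘ, Matrix.one_mul]
  rw [h1, hmap]
  have h2 : (Matrix.diagonal d * L1 * Matrix.diagonal d) *
      (Matrix.diagonal d * ((L1 * F * W1).map σ))
      = Matrix.diagonal d * (L1 * ((L1 * F * W1).map σ)) := by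
    simp only [Matrix.mul_assoc]
    rw [← Matrix.mul_assoc (Matrix.diagonal d) (Matrix.diagonal d), hΘΘ, Matrix.one_mul]
  rw [h2, Matrix.mul_assoc, hmap, Matrix.mul_assoc]
end

section
/- Let V be a finite set, let E be a finite family of nonempty subsets of V, let ω : E → ℝ assign a nonnegative weight to each hyperedge, and let p ≥ 1 be a real number. Then the Lovász-extension regularizer Ω(y) = Σ_{e∈E} ω(e) · (max_{u∈e} y_u − min_{v∈e} y_v)^p is a convex function of y ∈ ℝ^V. -/
open Finset

lemma convexOn_finset_sum' {ι : Type*} {E : Type*} [AddCommGroup E] [Module ℝ E]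
    {s : Set E} (hs : Convex ℝ s) (t : Finset ι) (f : ι → E → ℝ)
    (hf : ∀ i ∈ t, ConvexOn ℝ s (f i)) :
    ConvexOn ℝ s (fun x => ∑ i ∈ t, f i x) := by
  classical
  induction t using Finset.cons_induction with
  | empty => simpa using convexOn_const 0 hs
  | cons a t ha ih =>
    simp only [Finset.sum_cons]
    exact (hf a (mem_cons_self _ _)).add (ih fun i hi => hf i (mem_cons_of_mem hi))

lemma spread_convex {V : Type*} (e : Finset V) (he : e.Nonempty) :
    ∀ (x y : V → ℝ) (a b : ℝ), 0 ≤ a → 0 ≤ b → a + b = 1 →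
      e.sup' he (a • x + b • y) - e.inf' he (a • x + b • y)
        ≤ a * (e.sup' he x - e.inf' he x) + b * (e.sup' he y - e.inf' he y) := by
  intro x y a b ha hb hab
  have hsup : e.sup' he (a • x + b • y) ≤ a * e.sup' he x + b * e.sup' he y := by
    apply Finset.sup'_le
    intro i hi
    simp only [Pi.add_apply, Pi.smul_apply, smul_eq_mul]
    exact add_le_add (mul_le_mul_of_nonneg_left (Finset.le_sup' x hi) ha)
      (mul_le_mul_of_nonneg_left (Finset.le_sup' y hi) hb)
  have hinf : a * e.inf' he x + b * e.inf' he y ≤ e.inf' he (a • x + b • y) := by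
    apply Finset.le_inf'
    intro i hi
    simp only [Pi.add_apply, Pi.smul_apply, smul_eq_mul]
    exact add_le_add (mul_le_mul_of_nonneg_left (Finset.inf'_le x hi) ha)
      (mul_le_mul_of_nonneg_left (Finset.inf'_le y hi) hb)
  nlinarith [hsup, hinf]

theorem lovasz_extension_regularizer_convex
    {V : Type*} [Fintype V] [DecidableEq V]
    (E : Finset (Finset V)) (hE : ∀ e ∈ E, e.Nonempty)
    (ω : Finset V → ℝ) (hω : ∀ e ∈ E, 0 ≤ ω e)
    (p : ℝ) (hp : 1 ≤ p) :
    ConvexOn ℝ Set.univ (fun y : V → ℝ =>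
      ∑ e ∈ E.attach,
        ω e.1 * (e.1.sup' (hE e.1 e.2) y - e.1.inf' (hE e.1 e.2) y) ^ p) := by
  apply convexOn_finset_sum' convex_univ
  rintro ⟨e, heE⟩ -
  set he := hE e heE
  set f : (V → ℝ) → ℝ := fun y => e.sup' he y - e.inf' he y with hf
  have hf0 : ∀ y, 0 ≤ f y := by
    intro y
    obtain ⟨i, hi⟩ := he
    exact sub_nonneg.2 ((Finset.inf'_le y hi).trans (Finset.le_sup' y hi))
  refine ⟨convex_univ, ?_⟩
  intro x _ y _ a b ha hb hab
  simp only [smul_eq_mul]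
  have h1 : f (a • x + b • y) ^ p ≤ (a * f x + b * f y) ^ p :=
    Real.rpow_le_rpow (hf0 _) (spread_convex e he x y a b ha hb hab)
      (le_trans zero_le_one hp)
  have h2 : (a * f x + b * f y) ^ p ≤ a * (f x) ^ p + b * (f y) ^ p := by
    have := (convexOn_rpow hp).2 (Set.mem_Ici.2 (hf0 x)) (Set.mem_Ici.2 (hf0 y)) ha hb hab
    simpa using this
  have hωe : 0 ≤ ω e := hω e heE
  calc ω e * f (a • x + b • y) ^ p ≤ ω e * (a * (f x) ^ p + b * (f y) ^ p) :=
        mul_le_mul_of_nonneg_left (h1.trans h2) hωe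
    _ = a * (ω e * (f x) ^ p) + b * (ω e * (f y) ^ p) := by ring
end
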